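/- Let m ≥ 2 and let q_1 < q_2 < ⋯ < q_m be real numbers. Define the nonconvex PAR Ψ : [q_1, q_m] → ℝ by Ψ(z) = min_{1≤j≤m} |z − q_j| (equivalently, Ψ(z) = z − q_k for q_k ≤ z ≤ (q_k+q_{k+1})/2 and Ψ(z) = q_{k+1} − z for (q_k+q_{k+1})/2 ≤ z ≤ q_{k+1}). Fix λ > 0 and x ∈ [q_1, q_m], and let Φ(z) = λΨ(z) + (1/2)(z − x)². Then, writing clip(t, a, b) = min(max(t, a), b): (i) if q_k ≤ x ≤ (q_k+q_{k+1})/2 for some k, then z = clip(x − λ, q_k, (q_k+q_{k+1})/2) is a global minimizer of Φ over [q_1, q_m]; (ii) if (q_k+q_{k+1})/2 ≤ x ≤ q_{k+1} for some k, then z = clip(x + λ, (q_k+q_{k+1})/2, q_{k+1}) is a global minimizer of Φ over [q_1, q_m]. -/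

import Mathlib

/-!
Write `Ψ z = |z - q j|` for a nearest grid point `q j` of `z`. If `x` lies in the left half of
`[q k, q (k + 1)]`, every grid point is at distance at least `D = x - q k` from `x`, so
`Φ z ≥ λ · max (D - |z - x|) 0 + |z - x|² / 2`. Minimizing the right-hand side over `t = |z - x|`
is a one-dimensional problem with minimizer `t = min λ D`, and the clipped point `x - min λ D`
attains this minimum because its distance to `q k` is `D - min λ D`. The right half is symmetric.
-/

lemma min_le_abs_sub_of_monotoneOn {q : ℕ → ℝ} {m k j : ℕ} (hq : MonotoneOn q (Set.Iic m))
    (hk : k < m) (hj : j ≤ m) (x : ℝ) :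
    min (x - q k) (q (k + 1) - x) ≤ |x - q j| := by
  rcases Nat.lt_or_ge k j with hkj | hjk
  · have : q (k + 1) ≤ q j := hq (Set.mem_Iic.2 hk) (Set.mem_Iic.2 hj) hkj
    linarith [min_le_right (x - q k) (q (k + 1) - x), neg_le_abs (x - q j)]
  · have : q j ≤ q k := hq (Set.mem_Iic.2 hj) (Set.mem_Iic.2 hk.le) hjk
    linarith [min_le_left (x - q k) (q (k + 1) - x), le_abs_self (x - q j)]

/-- The value `λ (D - s) + s² / 2` at `s = min λ D` is the minimum over `t` of
`λ · max (D - t) 0 + t² / 2`. -/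
lemma one_dim_prox_le {lam D e t : ℝ} (hlam : 0 ≤ lam) (hD : 0 ≤ D) (he : 0 ≤ e)
    (hDe : D - t ≤ e) :
    lam * (D - min lam D) + (1 / 2) * min lam D ^ 2 ≤ lam * e + (1 / 2) * t ^ 2 := by
  rcases le_total lam D with hlD | hDl
  · rw [min_eq_left hlD]
    nlinarith [sq_nonneg (t - lam)]
  · rw [min_eq_right hDl]
    rcases le_total D t with hDt | htD
    · nlinarith [mul_nonneg hlam he]
    · nlinarith [sq_nonneg (D - t)]

lemma prox_abs_lower_bound {lam D x b : ℝ} (hlam : 0 ≤ lam) (hD : 0 ≤ D) (hDb : D ≤ |x - b|)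
    (z : ℝ) :
    lam * (D - min lam D) + (1 / 2) * min lam D ^ 2 ≤ lam * |z - b| + (1 / 2) * (z - x) ^ 2 := by
  rw [← sq_abs (z - x)]
  have htriangle := abs_sub_abs_le_abs_sub (x - b) (z - b)
  rw [sub_sub_sub_cancel_right, abs_sub_comm x z] at htriangle
  exact one_dim_prox_le hlam hD (abs_nonneg _) (by linarith)

lemma clip_sub_eq {lam a c x : ℝ} (hlam : 0 ≤ lam) (hax : a ≤ x) (hxc : x ≤ c) :
    min (max (x - lam) a) c = x - min lam (x - a) := by
  have hmax : max (x - lam) a = x - min lam (x - a) := by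
    rw [← max_sub_sub_left, sub_sub_cancel]
  rw [hmax, min_eq_left]
  linarith [le_min hlam (sub_nonneg.2 hax)]

lemma clip_add_eq {lam b c x : ℝ} (hlam : 0 ≤ lam) (hcx : c ≤ x) :
    min (max (x + lam) c) b = x + min lam (b - x) := by
  rw [max_eq_left (by linarith), ← min_add_add_left, add_sub_cancel]

theorem prox_nonconvex_par
    (m : ℕ)
    (q : ℕ → ℝ) (hqmono : ∀ k < m, q k < q (k + 1))
    (Ψ : ℝ → ℝ)
    (hΨ : ∀ z : ℝ, (∃ j ≤ m, Ψ z = |z - q j|) ∧ (∀ j ≤ m, Ψ z ≤ |z - q j|))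
    (lam : ℝ) (hlam : 0 < lam)
    (x : ℝ)
    (Φ : ℝ → ℝ) (hΦ : ∀ z, Φ z = lam * Ψ z + (1 / 2) * (z - x) ^ 2) :
    -- (i)
    (∀ k < m, q k ≤ x → x ≤ (q k + q (k + 1)) / 2 →
      ∀ z ∈ Set.Icc (q 0) (q m),
        Φ (min (max (x - lam) (q k)) ((q k + q (k + 1)) / 2)) ≤ Φ z) ∧
    -- (ii)
    (∀ k < m, (q k + q (k + 1)) / 2 ≤ x → x ≤ q (k + 1) →
      ∀ z ∈ Set.Icc (q 0) (q m),
        Φ (min (max (x + lam) ((q k + q (k + 1)) / 2)) (q (k + 1))) ≤ Φ z) := by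
  have hq : MonotoneOn q (Set.Iic m) := (strictMonoOn_Iic_of_lt_succ hqmono).monotoneOn
  constructor
  · intro k hk hkx hxmid z _
    obtain ⟨j, hj, hΨz⟩ := (hΨ z).1
    set D := x - q k
    have hD : D ≤ |x - q j| :=
      (min_eq_left (show D ≤ q (k + 1) - x by linarith)).ge.trans
        (min_le_abs_sub_of_monotoneOn hq hk hj x)
    have hΨw : Ψ (x - min lam D) ≤ D - min lam D := by
      have := (hΨ (x - min lam D)).2 k hk.le
      rwa [abs_of_nonneg (by linarith [min_le_right lam D]), sub_right_comm] at this
    have hbound := prox_abs_lower_bound hlam.le (sub_nonneg.2 hkx) hD z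
    rw [clip_sub_eq hlam.le hkx hxmid, hΦ, hΦ, hΨz]
    nlinarith [mul_le_mul_of_nonneg_left hΨw hlam.le]
  · intro k hk hmidx hxk z _
    obtain ⟨j, hj, hΨz⟩ := (hΨ z).1
    set D := q (k + 1) - x
    have hD : D ≤ |x - q j| :=
      (min_eq_right (show D ≤ x - q k by linarith)).ge.trans
        (min_le_abs_sub_of_monotoneOn hq hk hj x)
    have hΨw : Ψ (x + min lam D) ≤ D - min lam D := by
      have := (hΨ (x + min lam D)).2 (k + 1) hk
      rwa [abs_of_nonpos (by linarith [min_le_right lam D]), neg_sub, sub_add_eq_sub_sub] at this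
    have hbound := prox_abs_lower_bound hlam.le (sub_nonneg.2 hxk) hD z
    rw [clip_add_eq hlam.le hmidx, hΦ, hΦ, hΨz]
    nlinarith [mul_le_mul_of_nonneg_left hΨw hlam.le]
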